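/- Let $X(I^{n-1})$ and $Z(I^n)$ be rearrangement invariant Banach function spaces ($|I|=1$, $n \ge 2$). Then $Z(I^n) \hookrightarrow \mathcal{R}(X, L^\infty)$ holds if and only if $Z(I^n) = L^\infty(I^n)$ (with equivalent norms). In particular, a mixed norm space $\mathcal{R}(X, L^\infty)$ is itself a rearrangement invariant space if and only if $X = L^\infty(I^{n-1})$, in which case $\mathcal{R}(X,L^\infty) = L^\infty(I^n)$. -/

import Mathlib

open MeasureTheory Set ENNReal NNReal

noncomputable def cube (m : ℕ) : Set (Fin m → ℝ) := Set.univ.pi fun _ => Set.Ioo (0:ℝ) 1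
noncomputable def μcube (m : ℕ) : Measure (Fin m → ℝ) := volume.restrict (cube m)
/-- Lebesgue measure on `(0,1)`. -/
noncomputable def μ01 : Measure ℝ := volume.restrict (Set.Ioo (0:ℝ) 1)

/-- Decreasing rearrangement of a nonnegative (extended-real-valued) function. -/
noncomputable def rearr {α : Type*} [MeasurableSpace α] (μ : Measure α) (f : α → ℝ≥0∞) (t : ℝ) : ℝ≥0∞ :=
  sInf {a : ℝ≥0∞ | μ {x | a < f x} ≤ ENNReal.ofReal t}

/-- A rearrangement invariant Banach function norm (on nonnegative measurable functions
with values in `[0,∞]`, in the sense of Bennett–Sharpley): properties (A1)–(A5) together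
with rearrangement invariance. -/
structure RINorm {α : Type*} [MeasurableSpace α] (μ : Measure α) where
  N : (α → ℝ≥0∞) → ℝ≥0∞
  eq_zero : ∀ f : α → ℝ≥0∞, Measurable f → (N f = 0 ↔ f =ᵐ[μ] 0)
  add_le : ∀ f g : α → ℝ≥0∞, Measurable f → Measurable g → N (f + g) ≤ N f + N g
  smul : ∀ (c : ℝ≥0) (f : α → ℝ≥0∞), N (fun x => c * f x) = c * N f
  mono : ∀ f g : α → ℝ≥0∞, (∀ᵐ x ∂μ, g x ≤ f x) → N g ≤ N f
  sup_seq : ∀ f : ℕ → α → ℝ≥0∞, (∀ j, Measurable (f j)) → Monotone f →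
    N (fun x => ⨆ j, f j x) = ⨆ j, N (f j)
  const_lt : N (fun _ => 1) < ⊤
  int_le : ∃ c : ℝ≥0∞, c < ⊤ ∧ ∀ f : α → ℝ≥0∞, Measurable f → ∫⁻ x, f x ∂μ ≤ c * N f
  ri : ∀ f g : α → ℝ≥0∞, Measurable f → Measurable g →
    (∀ a : ℝ≥0∞, μ {x | a < f x} = μ {x | a < g x}) → N f = N g

/-- `ψ_k(f, L^∞)(x̂_k) = esssup_{x_k ∈ I} f(x̂_k, x_k)`. -/
noncomputable def psiK {n : ℕ} (f : (Fin (n+1) → ℝ) → ℝ≥0∞) (k : Fin (n+1)) (y : Fin n → ℝ) : ℝ≥0∞ :=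
  essSup (fun s : ℝ => f (k.insertNth s y)) (volume.restrict (Set.Ioo (0:ℝ) 1))

/-- The mixed norm `‖f‖_{R(X,L^∞)} = ∑_k ‖ψ_k(f,L^∞)‖_{X(I^{n-1})}`. -/
noncomputable def mixedNorm {n : ℕ} (X : RINorm (μcube n)) (f : (Fin (n+1) → ℝ) → ℝ≥0∞) : ℝ≥0∞ :=
  ∑ k : Fin (n+1), X.N (psiK f k)

/-!
If `Z = L^∞`, Fubini bounds every `ψ_k(f, L^∞)` a.e. by `‖f‖_∞`, so the mixed norm is at most
`(n + 1) ‖1‖_X ‖f‖_∞`. Conversely, test the embedding on the indicator of a set `S` of positive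
measure: rearrangement invariance of `Z` lets one replace `S` by a slab `(0,t) × Iⁿ` of the same
measure, whose lines in the first direction all have essential supremum `1`, so
`‖1‖_X ≤ C ‖χ_S‖_Z`. Applied to the level sets `{f > r}` this bounds `‖f‖_∞` by a multiple of
`‖f‖_Z`, while `‖f‖_Z ≤ ‖1‖_Z ‖f‖_∞` holds in every r.i. space.
-/

theorem setOf_lt_indicator_one {α : Type*} (S : Set α) (a : ℝ≥0∞) :
    {x | a < S.indicator 1 x} = if a < 1 then S else ∅ := by
  ext x
  by_cases hx : x ∈ S <;> split_ifs <;> simp_all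

namespace RINorm

variable {α : Type*} [MeasurableSpace α] {μ : Measure α} (Y : RINorm μ)

theorem N_const_one_pos [NeZero μ] : 0 < Y.N 1 := by
  refine pos_iff_ne_zero.mpr fun h => ?_
  have h_null : μ {x | ¬ (1 : ℝ≥0∞) = 0} = 0 := ae_iff.mp ((Y.eq_zero 1 measurable_const).mp h)
  exact NeZero.ne μ (by simpa using h_null)

theorem N_le_mul_N_one_of_ae_le [NeZero μ] {f : α → ℝ≥0∞} {M : ℝ≥0∞}
    (hf : ∀ᵐ x ∂μ, f x ≤ M) : Y.N f ≤ M * Y.N 1 := by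
  rcases eq_or_ne M ⊤ with rfl | hM
  · rw [ENNReal.top_mul (Y.N_const_one_pos).ne']
    exact le_top
  calc Y.N f ≤ Y.N fun x => (M.toNNReal : ℝ≥0∞) * (1 : α → ℝ≥0∞) x :=
        Y.mono _ _ (by simpa [ENNReal.coe_toNNReal hM] using hf)
    _ = M * Y.N 1 := by rw [Y.smul, ENNReal.coe_toNNReal hM]

theorem N_le_essSup_mul [NeZero μ] (f : α → ℝ≥0∞) : Y.N f ≤ essSup f μ * Y.N 1 :=
  Y.N_le_mul_N_one_of_ae_le (ae_le_essSup f)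

theorem N_indicator_eq_of_measure_eq {S T : Set α} (hS : MeasurableSet S) (hT : MeasurableSet T)
    (h : μ S = μ T) : Y.N (S.indicator 1) = Y.N (T.indicator 1) :=
  Y.ri _ _ (measurable_const.indicator hS) (measurable_const.indicator hT) fun a => by
    simp only [setOf_lt_indicator_one]
    split_ifs
    exacts [h, rfl]

theorem mul_essSup_le_of_le_N_indicator {a : ℝ≥0∞}
    (ha : ∀ S, MeasurableSet S → μ S ≠ 0 → a ≤ Y.N (S.indicator 1))
    {f : α → ℝ≥0∞} (hf : Measurable f) : a * essSup f μ ≤ Y.N f := by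
  refine ENNReal.mul_le_of_forall_lt fun a' ha' r hr => ?_
  lift r to ℝ≥0 using (hr.trans_le le_top).ne
  set S := {x | (r : ℝ≥0∞) < f x}
  have hS_pos : μ S ≠ 0 := fun h_null =>
    hr.not_ge (essSup_le_of_ae_le _ (ae_iff.mpr (by simpa only [not_le] using h_null)))
  calc a' * r ≤ Y.N (S.indicator 1) * r :=
        mul_le_mul_left (ha'.le.trans (ha S (measurableSet_lt measurable_const hf) hS_pos)) _
    _ = Y.N fun x => (r : ℝ≥0∞) * S.indicator 1 x := by rw [Y.smul, mul_comm]
    _ ≤ Y.N f := Y.mono _ _ <| ae_of_all _ fun x => by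
        by_cases hx : x ∈ S
        · simpa [hx] using hx.le
        · simp [hx]

end RINorm

theorem μcube_eq_pi (m : ℕ) :
    μcube m = Measure.pi fun _ : Fin m => volume.restrict (Ioo (0 : ℝ) 1) := by
  rw [μcube, cube, volume_pi, Measure.restrict_pi_pi]

theorem ae_mem_cube (m : ℕ) : ∀ᵐ y ∂(μcube m), y ∈ cube m :=
  ae_restrict_mem (.univ_pi fun _ => measurableSet_Ioo)

instance (m : ℕ) : IsProbabilityMeasure (μcube m) := by
  rw [μcube_eq_pi]
  have : IsProbabilityMeasure (volume.restrict (Ioo (0 : ℝ) 1)) := ⟨by simp⟩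
  infer_instance

theorem measurePreserving_insertNth_μcube {n : ℕ} (k : Fin (n+1)) :
    MeasurePreserving (fun p : (Fin n → ℝ) × ℝ => k.insertNth p.2 p.1)
      ((μcube n).prod (volume.restrict (Ioo (0 : ℝ) 1))) (μcube (n+1)) := by
  rw [μcube_eq_pi, μcube_eq_pi]
  exact (measurePreserving_piFinSuccAbove (fun _ => volume.restrict (Ioo (0 : ℝ) 1)) k).symm.comp
    Measure.measurePreserving_swap

theorem ae_psiK_le_essSup {n : ℕ} (f : (Fin (n+1) → ℝ) → ℝ≥0∞) (k : Fin (n+1)) :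
    ∀ᵐ y ∂(μcube n), psiK f k y ≤ essSup f (μcube (n+1)) := by
  have h_prod := (measurePreserving_insertNth_μcube k).quasiMeasurePreserving.ae
    (ae_le_essSup f)
  filter_upwards [Measure.ae_ae_of_ae_prod h_prod] with y hy
  exact essSup_le_of_ae_le _ hy

theorem mixedNorm_le_mul_essSup {n : ℕ} (X : RINorm (μcube n)) (f : (Fin (n+1) → ℝ) → ℝ≥0∞) :
    mixedNorm X f ≤ (n + 1) * X.N 1 * essSup f (μcube (n+1)) := by
  calc mixedNorm X f ≤ ∑ _k : Fin (n+1), essSup f (μcube (n+1)) * X.N 1 :=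
        Finset.sum_le_sum fun k _ => X.N_le_mul_N_one_of_ae_le (ae_psiK_le_essSup f k)
    _ = (n + 1) * X.N 1 * essSup f (μcube (n+1)) := by
        simp only [Finset.sum_const, Finset.card_univ, Fintype.card_fin, nsmul_eq_mul,
          Nat.cast_add, Nat.cast_one]
        ring

def slab (n : ℕ) (t : ℝ) : Set (Fin (n+1) → ℝ) :=
  univ.pi fun j => Ioo 0 (if j = 0 then t else 1)

theorem measurableSet_slab (n : ℕ) (t : ℝ) : MeasurableSet (slab n t) :=
  .univ_pi fun _ => measurableSet_Ioo

theorem restrict_Ioo_zero_one_Ioo {t : ℝ} (ht : t ≤ 1) :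
    volume.restrict (Ioo (0 : ℝ) 1) (Ioo 0 t) = ENNReal.ofReal t := by
  rw [Measure.restrict_apply measurableSet_Ioo, inter_eq_left.mpr (Ioo_subset_Ioo_right ht),
    Real.volume_Ioo, sub_zero]

theorem μcube_slab (n : ℕ) {t : ℝ} (ht : t ≤ 1) : μcube (n+1) (slab n t) = ENNReal.ofReal t := by
  rw [μcube_eq_pi, slab, Measure.pi_pi, Fin.prod_univ_succ]
  simp [Fin.succ_ne_zero, restrict_Ioo_zero_one_Ioo ht]

theorem insertNth_zero_mem_slab {n : ℕ} {t s : ℝ} {y : Fin n → ℝ} (hy : y ∈ cube n) :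
    (0 : Fin (n+1)).insertNth s y ∈ slab n t ↔ s ∈ Ioo 0 t := by
  simp_all [cube, slab, Fin.forall_iff_succ]

theorem psiK_indicator_slab {n : ℕ} {t : ℝ} (ht : 0 < t) (ht1 : t ≤ 1) {y : Fin n → ℝ}
    (hy : y ∈ cube n) : psiK ((slab n t).indicator 1) 0 y = 1 := by
  have h_section : (fun s => (slab n t).indicator 1 ((0 : Fin (n+1)).insertNth s y))
      = (Ioo 0 t).indicator (1 : ℝ → ℝ≥0∞) := by
    ext s
    simp only [indicator, insertNth_zero_mem_slab hy, Pi.one_apply]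
  rw [psiK, h_section, essSup_indicator_eq_essSup_restrict measurableSet_Ioo,
    Pi.one_def, essSup_const]
  rw [Ne, Measure.restrict_eq_zero, restrict_Ioo_zero_one_Ioo ht1]
  exact (ENNReal.ofReal_pos.mpr ht).ne'

theorem N_one_le_mixedNorm_indicator_slab {n : ℕ} (X : RINorm (μcube n)) {t : ℝ} (ht : 0 < t)
    (ht1 : t ≤ 1) : X.N 1 ≤ mixedNorm X ((slab n t).indicator 1) := by
  have h_psiK : (1 : (Fin n → ℝ) → ℝ≥0∞) ≤ᵐ[μcube n] psiK ((slab n t).indicator 1) 0 := by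
    filter_upwards [ae_mem_cube n] with y hy
    rw [psiK_indicator_slab ht ht1 hy, Pi.one_apply]
  calc X.N 1 ≤ X.N (psiK ((slab n t).indicator 1) 0) := X.mono _ _ h_psiK
    _ ≤ mixedNorm X ((slab n t).indicator 1) :=
        Finset.single_le_sum (f := fun k => X.N (psiK _ k)) (fun _ _ => zero_le)
          (Finset.mem_univ 0)

theorem N_one_le_mul_N_indicator {n : ℕ} (X : RINorm (μcube n)) (Z : RINorm (μcube (n+1)))
    {C : ℝ≥0} (hXZ : ∀ f, Measurable f → mixedNorm X f ≤ C * Z.N f)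
    {S : Set (Fin (n+1) → ℝ)} (hS : MeasurableSet S) (hS_pos : μcube (n+1) S ≠ 0) :
    X.N 1 ≤ C * Z.N (S.indicator 1) := by
  set t := (μcube (n+1) S).toReal
  have ht : 0 < t := ENNReal.toReal_pos hS_pos (measure_ne_top _ _)
  have ht1 : t ≤ 1 := ENNReal.toReal_le_of_le_ofReal zero_le_one (by simpa using prob_le_one)
  have h_meas : μcube (n+1) (slab n t) = μcube (n+1) S := by
    rw [μcube_slab n ht1, ENNReal.ofReal_toReal (measure_ne_top _ _)]
  calc X.N 1 ≤ mixedNorm X ((slab n t).indicator 1) := N_one_le_mixedNorm_indicator_slab X ht ht1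
    _ ≤ C * Z.N ((slab n t).indicator 1) :=
        hXZ _ (measurable_const.indicator (measurableSet_slab n t))
    _ = C * Z.N (S.indicator 1) := by
        rw [Z.N_indicator_eq_of_measure_eq (measurableSet_slab n t) hS h_meas]

theorem exists_mul_essSup_le_N {n : ℕ} (X : RINorm (μcube n)) (Z : RINorm (μcube (n+1)))
    {C : ℝ≥0} (hXZ : ∀ f, Measurable f → mixedNorm X f ≤ C * Z.N f) :
    ∃ c : ℝ≥0, 0 < c ∧ ∀ f, Measurable f → (c : ℝ≥0∞) * essSup f (μcube (n+1)) ≤ Z.N f := by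
  have hX_pos := X.N_const_one_pos
  have hC : (C : ℝ≥0∞) ≠ 0 := fun hC => hX_pos.ne' <| by
    simpa [hC] using N_one_le_mul_N_indicator X Z hXZ MeasurableSet.univ (by simp)
  have hc_top : X.N 1 / C ≠ ⊤ := ENNReal.div_ne_top X.const_lt.ne hC
  have hc_pos : 0 < X.N 1 / C := ENNReal.div_pos hX_pos.ne' ENNReal.coe_ne_top
  refine ⟨(X.N 1 / C).toNNReal, ENNReal.toNNReal_pos hc_pos.ne' hc_top, fun f hf => ?_⟩
  rw [ENNReal.coe_toNNReal hc_top]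
  exact Z.mul_essSup_le_of_le_N_indicator (fun S hS hS_pos =>
    ENNReal.div_le_of_le_mul' (N_one_le_mul_N_indicator X Z hXZ hS hS_pos)) hf

theorem exists_mixedNorm_le_mul_N {n : ℕ} (X : RINorm (μcube n)) (Z : RINorm (μcube (n+1)))
    {c : ℝ≥0} (hc : 0 < c)
    (h_lower : ∀ f, Measurable f → (c : ℝ≥0∞) * essSup f (μcube (n+1)) ≤ Z.N f) :
    ∃ C : ℝ≥0, ∀ f, Measurable f → mixedNorm X f ≤ C * Z.N f := by
  have hc' : (c : ℝ≥0∞) ≠ 0 := by exact_mod_cast hc.ne'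
  set K : ℝ≥0∞ := (n + 1) * X.N 1 / c
  have hK : K ≠ ⊤ := ENNReal.div_ne_top (by finiteness [X.const_lt]) hc'
  refine ⟨K.toNNReal, fun f hf => ?_⟩
  have h_essSup : essSup f (μcube (n+1)) ≤ Z.N f / c :=
    ENNReal.le_div_iff_mul_le (.inl hc') (.inl ENNReal.coe_ne_top) |>.mpr
      (by rw [mul_comm]; exact h_lower f hf)
  calc mixedNorm X f ≤ (n + 1) * X.N 1 * essSup f (μcube (n+1)) := mixedNorm_le_mul_essSup X f
    _ ≤ (n + 1) * X.N 1 * (Z.N f / c) := by gcongr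
    _ = K.toNNReal * Z.N f := by
      rw [ENNReal.coe_toNNReal hK]
      simp only [K, div_eq_mul_inv]
      ring

theorem Z_into_mixed_iff_Linf_general (n : ℕ)
    (X : RINorm (μcube n)) (Z : RINorm (μcube (n+1))) :
    (∃ C : ℝ≥0, ∀ f : (Fin (n+1) → ℝ) → ℝ≥0∞, Measurable f →
        mixedNorm X f ≤ C * Z.N f)
      ↔ (∃ c C : ℝ≥0, 0 < c ∧ ∀ f : (Fin (n+1) → ℝ) → ℝ≥0∞, Measurable f →
          (c : ℝ≥0∞) * essSup f (μcube (n+1)) ≤ Z.N f ∧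
            Z.N f ≤ C * essSup f (μcube (n+1))) := by
  constructor
  · rintro ⟨C, hXZ⟩
    obtain ⟨c, hc, h_lower⟩ := exists_mul_essSup_le_N X Z hXZ
    refine ⟨c, (Z.N 1).toNNReal, hc, fun f hf => ⟨h_lower f hf, ?_⟩⟩
    have hZ_one : Z.N 1 ≠ ⊤ := Z.const_lt.ne
    rw [ENNReal.coe_toNNReal hZ_one, mul_comm]
    exact Z.N_le_essSup_mul f
  · rintro ⟨c, _, hc, h⟩
    exact exists_mixedNorm_le_mul_N X Z hc fun f hf => (h f hf).1

/-- `Z(Iⁿ) ↪ R(X,L^∞)` holds if and only if `Z(Iⁿ) = L^∞(Iⁿ)` with equivalent norms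
(ambient dimension `n+1 ≥ 2`, `X` an r.i. space on `I^n`). -/
theorem Z_into_mixed_iff_Linf (n : ℕ) (hn : 1 ≤ n)
    (X : RINorm (μcube n)) (Z : RINorm (μcube (n+1))) :
    (∃ C : ℝ≥0, ∀ f : (Fin (n+1) → ℝ) → ℝ≥0∞, Measurable f →
        mixedNorm X f ≤ C * Z.N f)
      ↔ (∃ c C : ℝ≥0, 0 < c ∧ ∀ f : (Fin (n+1) → ℝ) → ℝ≥0∞, Measurable f →
          (c : ℝ≥0∞) * essSup f (μcube (n+1)) ≤ Z.N f ∧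
            Z.N f ≤ C * essSup f (μcube (n+1))) :=
  Z_into_mixed_iff_Linf_general n X Z
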